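/- arXiv:1202.5578 — 2 statements merged into one kernel-verified Lean document; each statement's English description precedes it below -/
import Mathlib

section
/- With notation as in the blowup of a quasitoric orbifold along a face with $\lambda_0 = \sum_{j=1}^k b_j \lambda_j$: if $b_i < 1$ for each $i = 1, \ldots, k$, then for every vertex $w$ of $F$ and every vertex $v_i$ in the preimage of $w$ under the blowdown, $o(G_{v_i}) < o(G_w)$, i.e., the blowdown is a resolution. -/
theorem Matrix.abs_det_updateCol_sum_lt {ι R : Type*} [Fintype ι] [DecidableEq ι]
    [CommRing R] [LinearOrder R] [IsStrictOrderedRing R]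
    (A : Matrix ι ι R) (hA : A.det ≠ 0) (c : ι → R) (i : ι) (hc : |c i| < 1) :
    |(A.updateCol i (fun r => ∑ j, c j * A r j)).det| < |A.det| := by
  have hdet : (A.updateCol i (fun r => ∑ j, c j * A r j)).det = c i * A.det := by
    simpa only [smul_eq_mul] using A.det_updateCol_sum i c
  rw [hdet, abs_mul]
  exact mul_lt_of_lt_one_left (abs_pos.mpr hA) hc

theorem stmt_6_general (n k : ℕ) (A : Matrix (Fin n) (Fin n) ℚ)
    (hdet : A.det ≠ 0)
    (b : Fin n → ℚ) (hbpos : ∀ j : Fin n, (j : ℕ) < k → 0 < b j)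
    (hblt : ∀ j : Fin n, (j : ℕ) < k → b j < 1)
    (i : Fin n) (hi : (i : ℕ) < k) :
    |(A.updateCol i (fun r => ∑ j, b j * A r j)).det| < |A.det| :=
  A.abs_det_updateCol_sum_lt hdet b i
    (abs_lt.mpr ⟨by linarith [hbpos i hi], hblt i hi⟩)

/-- If `b_i < 1` for each `i ≤ k`, then the blowdown is a resolution: the order
`o(G_{v_i}) = |det Λ_{v_i}|` of the local group at each new vertex `v_i` is
strictly smaller than `o(G_w) = |det Λ_w|`. -/
theorem stmt_6 (n k : ℕ) (hk : k ≤ n) (A : Matrix (Fin n) (Fin n) ℚ)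
    (hdet : A.det ≠ 0)
    (b : Fin n → ℚ) (hbpos : ∀ j : Fin n, (j : ℕ) < k → 0 < b j)
    (hbzero : ∀ j : Fin n, ¬ (j : ℕ) < k → b j = 0)
    (hblt : ∀ j : Fin n, (j : ℕ) < k → b j < 1)
    (i : Fin n) (hi : (i : ℕ) < k) :
    |(A.updateCol i (fun r => ∑ j, b j * A r j)).det| < |A.det| :=
  stmt_6_general n k A hdet b hbpos hblt i hi
end

section
/- Quasi-SL is preserved under crepant blowup: let $\lambda_1, \ldots, \lambda_n \in \mathbb{Z}^n$ be linearly independent, $\lambda_0 = \sum_{j=1}^k b_j \lambda_j$ with $b_j > 0$ and $\sum_{j=1}^k b_j = 1$. Suppose that for every $\eta \in \mathbb{Z}^n$ written as $\eta = \sum_{j=1}^n (m_j + a_j)\lambda_j$ with $m_j \in \mathbb{Z}$, $a_j \in [0,1) \cap \mathbb{Q}$, the sum $\sum_{j=1}^n a_j$ is an integer. Then for every $\eta \in \mathbb{Z}^n$ of the form $\eta = c_0 \lambda_0 + \sum_{j=2}^n c_j \lambda_j$ with $c_j \in [0,1) \cap \mathbb{Q}$ (here $c_0$ replaces the coefficient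 of $\lambda_1$ and $b_1 > 0$), the sum $c_0 + \sum_{j=2}^n c_j$ is an integer. -/
/-!
Substituting `λ₀ = ∑ bⱼ λⱼ` rewrites a point `η = c₀ λ₀ + ∑_{j ≥ 2} cⱼ λⱼ` in the basis
`λ₁, …, λₙ` with coefficients `dⱼ = c₀ bⱼ + cⱼ` (where `c₁ := 0`). Since `∑ bⱼ = 1`, the
coefficient sums agree: `∑ dⱼ = c₀ + ∑_{j ≥ 2} cⱼ`. Splitting each `dⱼ` into its integer
and fractional parts, the quasi-SL property at the old vertex makes the sum of the fractional
parts, hence `∑ dⱼ`, an integer.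
-/

open Finset

section Substitution

variable {ι R M : Type*} [Fintype ι] [DecidableEq ι] [Semiring R] [AddCommMonoid M] [Module R M]

def substCoeffs (b c : ι → R) (i : ι) : ι → R :=
  c i • b + Function.update c i 0

theorem sum_substCoeffs_smul (v : ι → M) (b c : ι → R) (i : ι) :
    ∑ j, substCoeffs b c i j • v j =
      c i • ∑ j, b j • v j + ∑ j ∈ univ.erase i, c j • v j := by
  have hupdate : ∑ j, Function.update c i 0 j • v j = ∑ j ∈ univ.erase i, c j • v j := by
    rw [← sum_erase_add _ _ (mem_univ i), Function.update_self, zero_smul, add_zero]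
    exact sum_congr rfl fun j hj => by rw [Function.update_of_ne (ne_of_mem_erase hj)]
  simp only [substCoeffs, Pi.add_apply, Pi.smul_apply, add_smul, sum_add_distrib, smul_sum,
    smul_eq_mul, mul_smul, hupdate]

theorem sum_substCoeffs {b : ι → R} (hb : ∑ j, b j = 1) (c : ι → R) (i : ι) :
    ∑ j, substCoeffs b c i j = ∑ j, c j := by
  simpa [hb, add_sum_erase] using sum_substCoeffs_smul (fun _ => (1 : R)) b c i

end Substitution

theorem exists_int_sum_eq_of_sum_fract {ι K : Type*} [Fintype ι] [Ring K] [LinearOrder K]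
    [IsStrictOrderedRing K] [FloorRing K] (d : ι → K) {z : ℤ} (hz : ∑ j, Int.fract (d j) = z) :
    ∃ z : ℤ, ∑ j, d j = z :=
  ⟨∑ j, ⌊d j⌋ + z, by
    simp only [← hz, Int.cast_add, Int.cast_sum, ← sum_add_distrib, Int.floor_add_fract]⟩

theorem stmt_12_general (n : ℕ) (hn : 0 < n)
    (lam : Fin n → (Fin n → ℤ))
    (b : Fin n → ℚ)
    (hbsum : ∑ j, b j = 1)
    (lam0 : Fin n → ℚ) (hlam0 : lam0 = ∑ j, b j • (fun r => (lam j r : ℚ)))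
    (hSL : ∀ (η : Fin n → ℤ) (m : Fin n → ℤ) (a : Fin n → ℚ),
      (∀ j, 0 ≤ a j ∧ a j < 1) →
      ((fun i => (η i : ℚ)) = ∑ j, ((m j : ℚ) + a j) • (fun r => (lam j r : ℚ))) →
      ∃ z : ℤ, (∑ j, a j) = z) :
    ∀ (η : Fin n → ℤ) (c : Fin n → ℚ),
      (∀ j, 0 ≤ c j ∧ c j < 1) →
      ((fun i => (η i : ℚ)) = c ⟨0, hn⟩ • lam0 +
        ∑ j ∈ Finset.univ.erase ⟨0, hn⟩, c j • (fun r => (lam j r : ℚ))) →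
      ∃ z : ℤ, (∑ j, c j) = z := by
  intro η c _ hη
  set d := substCoeffs b c ⟨0, hn⟩
  have hηd : (fun i => (η i : ℚ)) =
      ∑ j, ((⌊d j⌋ : ℚ) + Int.fract (d j)) • fun r => (lam j r : ℚ) := by
    simp only [Int.floor_add_fract]
    rw [sum_substCoeffs_smul, hη, hlam0]
  obtain ⟨z, hz⟩ := hSL η (fun j => ⌊d j⌋) (fun j => Int.fract (d j))
    (fun j => ⟨Int.fract_nonneg _, Int.fract_lt_one _⟩) hηd
  rw [← sum_substCoeffs hbsum c ⟨0, hn⟩]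
  exact exists_int_sum_eq_of_sum_fract d hz

/-- Quasi-SL is preserved under crepant blowup: if all ages at the vertex `w`
(with characteristic vectors `λ₁, …, λₙ`) are integers, then all ages at the
new vertex `v₁` (with characteristic vectors `λ₀ = ∑_{j<k} b_j λ_j, λ₂, …, λₙ`,
where `b_j > 0` and `∑ b_j = 1`) are integers. Indices are `Fin n`, with
index `0` playing the role of `1`. -/
theorem stmt_12 (n k : ℕ) (hn : 0 < n) (hk1 : 1 ≤ k) (hk : k ≤ n)
    (lam : Fin n → (Fin n → ℤ))
    (hli : LinearIndependent ℚ (fun j => fun i => ((lam j i : ℚ))))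
    (b : Fin n → ℚ) (hbpos : ∀ j : Fin n, (j : ℕ) < k → 0 < b j)
    (hbzero : ∀ j : Fin n, ¬ (j : ℕ) < k → b j = 0)
    (hbsum : ∑ j, b j = 1)
    (lam0 : Fin n → ℚ) (hlam0 : lam0 = ∑ j, b j • (fun r => (lam j r : ℚ)))
    (hSL : ∀ (η : Fin n → ℤ) (m : Fin n → ℤ) (a : Fin n → ℚ),
      (∀ j, 0 ≤ a j ∧ a j < 1) →
      ((fun i => (η i : ℚ)) = ∑ j, ((m j : ℚ) + a j) • (fun r => (lam j r : ℚ))) →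
      ∃ z : ℤ, (∑ j, a j) = z) :
    ∀ (η : Fin n → ℤ) (c : Fin n → ℚ),
      (∀ j, 0 ≤ c j ∧ c j < 1) →
      ((fun i => (η i : ℚ)) = c ⟨0, hn⟩ • lam0 +
        ∑ j ∈ Finset.univ.erase ⟨0, hn⟩, c j • (fun r => (lam j r : ℚ))) →
      ∃ z : ℤ, (∑ j, c j) = z :=
  stmt_12_general n hn lam b hbsum lam0 hlam0 hSL
end
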